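/- Let P and Q be disjoint measurable subsets of ℝᴺ of finite positive measure and Φ an Orlicz function. Then for every u ∈ C¹_c(ℝᴺ), Φ(|(u)_P − (u)_Q|) ≤ (2^{p⁺_Φ}/min{|P|,|Q|}) ∫_{P∪Q} Φ(|u(x) − (u)_{P∪Q}|) dx, where (u)_A denotes the average of u over A. -/

import Mathlib

open MeasureTheory Real Set Filter
open scoped ENNReal

/-- An Orlicz function, given by its right-continuous derivative `phi`. -/
structure OrliczFunction where
  phi : ℝ → ℝ
  mono : MonotoneOn phi (Set.Ici 0)
  rightCont : ∀ t, 0 ≤ t → ContinuousWithinAt phi (Set.Ici t) t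
  map_zero : phi 0 = 0
  pos : ∀ t, 0 < t → 0 < phi t
  tendsto_atTop : Filter.Tendsto phi Filter.atTop Filter.atTop
  delta2 : ∃ C > 0, ∀ t, 0 ≤ t →
    (∫ s in (0:ℝ)..(2 * t), phi s) ≤ C * ∫ s in (0:ℝ)..t, phi s

/-- The Orlicz function itself: `Φ(t) = ∫₀ᵗ φ(s) ds`. -/
noncomputable def OrliczFunction.Phi (O : OrliczFunction) (t : ℝ) : ℝ :=
  ∫ s in (0:ℝ)..t, O.phi s

/-- The set `{ tφ(t)/Φ(t) : t > 0 }` used to define the Orlicz indices. -/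
def OrliczFunction.indexSet (O : OrliczFunction) : Set ℝ :=
  {r | ∃ t, 0 < t ∧ r = t * O.phi t / O.Phi t}

/-- Upper Orlicz index `p⁺_Φ`. -/
noncomputable def OrliczFunction.pPlus (O : OrliczFunction) : ℝ := sSup O.indexSet

/-- Lower Orlicz index `p⁻_Φ`. -/
noncomputable def OrliczFunction.pMinus (O : OrliczFunction) : ℝ := sInf O.indexSet

/-- Euclidean space `ℝᴺ`. -/
noncomputable abbrev E (N : ℕ) := EuclideanSpace ℝ (Fin N)

/-- Last coordinate `x_N` of `x ∈ ℝᴺ`. -/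
noncomputable def lastCoord {N : ℕ} (hN : 0 < N) (x : E N) : ℝ :=
  x ⟨N - 1, Nat.sub_lt hN Nat.one_pos⟩

/-- First `N-1` coordinates `x′` of `x ∈ ℝᴺ`. -/
noncomputable def firstCoords {N : ℕ} (x : E N) : E (N - 1) :=
  WithLp.toLp 2 (fun i => x (Fin.castLE (Nat.sub_le N 1) i))

/-- The cube `Ω_{n,T} = (-n,n)^{N-1} × (0,T)`. -/
def cube {N : ℕ} (hN : 0 < N) (n T : ℝ) : Set (E N) :=
  {x | (∀ i, firstCoords x i ∈ Set.Ioo (-n) n) ∧ lastCoord hN x ∈ Set.Ioo 0 T}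

/-- The domain above the graph of `γ : ℝ^{N-1} → ℝ`. -/
def aboveGraph {N : ℕ} (hN : 0 < N) (γ : E (N - 1) → ℝ) : Set (E N) :=
  {x | γ (firstCoords x) < lastCoord hN x}

/-- The fractional Orlicz Gagliardo modular `∫_Ω∫_Ω Φ(|D_s u(x,y)|) dμ`. -/
noncomputable def fracModular {N : ℕ} (O : OrliczFunction) (s : ℝ) (Ω : Set (E N))
    (u : E N → ℝ) : ℝ :=
  ∫ x in Ω, ∫ y in Ω, O.Phi (|u x - u y| / dist x y ^ s) / dist x y ^ N

/-- The weighted fractional Orlicz modular `∫_Ω∫_Ω Φ(|D_s u| x_N^{α₁} y_N^{α₂}) dμ`. -/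
noncomputable def fracModularW {N : ℕ} (O : OrliczFunction) (s α₁ α₂ : ℝ) (hN : 0 < N)
    (Ω : Set (E N)) (u : E N → ℝ) : ℝ :=
  ∫ x in Ω, ∫ y in Ω,
    O.Phi (|u x - u y| / dist x y ^ s * lastCoord hN x ^ α₁ * lastCoord hN y ^ α₂) /
      dist x y ^ N

/-- `u ∈ C¹_c(Ω)`. -/
def IsCc1 {N : ℕ} (Ω : Set (E N)) (u : E N → ℝ) : Prop :=
  ContDiff ℝ 1 u ∧ HasCompactSupport u ∧ tsupport u ⊆ Ω

/-- A bounded Lipschitz domain: near each boundary point, up to an isometry, the set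
coincides with the region above the graph of a Lipschitz function. -/
def IsBoundedLipschitzDomain {N : ℕ} (hN : 0 < N) (Ω : Set (E N)) : Prop :=
  IsOpen Ω ∧ Bornology.IsBounded Ω ∧ Ω.Nonempty ∧
    ∀ x ∈ frontier Ω, ∃ r > 0, ∃ T : E N ≃ᵢ E N, ∃ γ : E (N - 1) → ℝ, ∃ L : NNReal,
      LipschitzWith L γ ∧
        (T '' Ω) ∩ Metric.ball (T x) r = aboveGraph hN γ ∩ Metric.ball (T x) r

/-- distance to the boundary -/
noncomputable def distBd {N : ℕ} (Ω : Set (E N)) (x : E N) : ℝ :=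
  Metric.infDist x (frontier Ω)

/-!
Jensen's inequality on `P` and on `Q` bounds `Φ(|(u)_P - m|)` and `Φ(|(u)_Q - m|)`, where
`m = (u)_{P∪Q}`, by `|P|⁻¹` resp. `|Q|⁻¹` times `∫_{P∪Q} Φ(|u - m|)`. The two are combined through
the quasi-triangle inequality `Φ(|a - b|) ≤ ½ Φ(2|a - m|) + ½ Φ(2|b - m|)` and the doubling bound
`Φ(2t) ≤ 2^{p⁺} Φ(t)`. The latter holds because `t φ(t) ≤ p⁺ Φ(t)` makes `Φ(t) t^{-p⁺}` antitone.
-/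

namespace OrliczFunction

variable (O : OrliczFunction) {s t : ℝ}

theorem phi_nonneg (ht : 0 ≤ t) : 0 ≤ O.phi t := by
  rcases ht.eq_or_lt with rfl | ht
  · exact O.map_zero.ge
  · exact (O.pos t ht).le

theorem intervalIntegrable_phi (hs : 0 ≤ s) (ht : 0 ≤ t) :
    IntervalIntegrable O.phi volume s t :=
  (O.mono.mono fun _ hx => (le_min hs ht).trans hx.1).intervalIntegrable

@[simp]
theorem Phi_zero : O.Phi 0 = 0 :=
  intervalIntegral.integral_same

theorem Phi_sub_Phi (hs : 0 ≤ s) (ht : 0 ≤ t) : O.Phi t - O.Phi s = ∫ r in s..t, O.phi r :=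
  intervalIntegral.integral_interval_sub_left (O.intervalIntegrable_phi le_rfl ht)
    (O.intervalIntegrable_phi le_rfl hs)

theorem Phi_nonneg (ht : 0 ≤ t) : 0 ≤ O.Phi t :=
  intervalIntegral.integral_nonneg ht fun _ hr => O.phi_nonneg hr.1

theorem monotoneOn_Phi : MonotoneOn O.Phi (Ici 0) := by
  intro s hs t ht hst
  have : 0 ≤ O.Phi t - O.Phi s := by
    rw [O.Phi_sub_Phi hs ht]
    exact intervalIntegral.integral_nonneg hst fun r hr => O.phi_nonneg (le_trans hs hr.1)
  linarith

theorem sub_mul_phi_le_Phi_sub_Phi (hs : 0 ≤ s) (hst : s ≤ t) :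
    (t - s) * O.phi s ≤ O.Phi t - O.Phi s := by
  have ht := hs.trans hst
  rw [O.Phi_sub_Phi hs ht]
  simpa using intervalIntegral.integral_mono_on hst intervalIntegrable_const
    (O.intervalIntegrable_phi hs ht) fun r hr => O.mono hs (hs.trans hr.1) hr.1

theorem Phi_sub_Phi_le_sub_mul_phi (hs : 0 ≤ s) (hst : s ≤ t) :
    O.Phi t - O.Phi s ≤ (t - s) * O.phi t := by
  have ht := hs.trans hst
  rw [O.Phi_sub_Phi hs ht]
  simpa using intervalIntegral.integral_mono_on hst (O.intervalIntegrable_phi hs ht)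
    intervalIntegrable_const fun r hr => O.mono (hs.trans hr.1) ht hr.2

theorem Phi_pos (ht : 0 < t) : 0 < O.Phi t := by
  have hinc := O.sub_mul_phi_le_Phi_sub_Phi (s := t / 2) (t := t) (by positivity) (by linarith)
  have := mul_pos (by linarith : 0 < t - t / 2) (O.pos (t / 2) (by positivity))
  linarith [O.Phi_nonneg (by positivity : 0 ≤ t / 2)]

theorem bddAbove_indexSet : BddAbove O.indexSet := by
  obtain ⟨C, -, hC⟩ := O.delta2
  refine ⟨C, ?_⟩
  rintro r ⟨t, ht, rfl⟩
  rw [div_le_iff₀ (O.Phi_pos ht)]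
  have hinc := O.sub_mul_phi_le_Phi_sub_Phi ht.le (by linarith : t ≤ 2 * t)
  have hdouble : O.Phi (2 * t) ≤ C * O.Phi t := hC t ht.le
  linarith [O.Phi_nonneg ht.le]

theorem mul_phi_le_pPlus_mul_Phi (ht : 0 < t) : t * O.phi t ≤ O.pPlus * O.Phi t :=
  (div_le_iff₀ (O.Phi_pos ht)).1 (le_csSup O.bddAbove_indexSet ⟨t, ht, rfl⟩)

theorem hasDerivWithinAt_Phi (ht : 0 ≤ t) : HasDerivWithinAt O.Phi (O.phi t) (Ici t) t :=
  intervalIntegral.integral_hasDerivWithinAt_right (O.intervalIntegrable_phi le_rfl ht)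
    (AEStronglyMeasurable.stronglyMeasurableAtFilter_of_mem
      (O.intervalIntegrable_phi ht (by linarith)).1.aestronglyMeasurable
      (Ioc_mem_nhdsGT (lt_add_one t)))
    ((O.rightCont t ht).mono Ioi_subset_Ici_self)

theorem continuousOn_Phi : ContinuousOn O.Phi (Ici 0) := by
  intro t ht
  have ht : (0 : ℝ) ≤ t := ht
  have h := intervalIntegral.continuousOn_primitive_interval'
    (O.intervalIntegrable_phi le_rfl (by linarith : (0 : ℝ) ≤ t + 1)) left_mem_uIcc
  rw [uIcc_of_le (by linarith)] at h
  refine (h t ⟨ht, by linarith⟩).mono_of_mem_nhdsWithin ?_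
  rw [← Ici_inter_Iic]
  exact inter_mem_nhdsWithin _ (Iic_mem_nhds (lt_add_one t))

theorem Phi_le_rpow_mul_Phi (ht : 0 < t) (hts : t ≤ s) :
    O.Phi s ≤ (s / t) ^ O.pPlus * O.Phi t := by
  set p := O.pPlus
  have hpow : ∀ r, 0 < r → HasDerivAt (fun r : ℝ => r ^ (-p)) (-p * r ^ (-p - 1)) r :=
    fun r hr => Real.hasDerivAt_rpow_const (Or.inl hr.ne')
  have hderiv : ∀ r ∈ Ico t s, HasDerivWithinAt (fun r => O.Phi r * r ^ (-p))
      (O.phi r * r ^ (-p) + O.Phi r * (-p * r ^ (-p - 1))) (Ici r) r := fun r hr =>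
    (O.hasDerivWithinAt_Phi (ht.le.trans hr.1)).mul (hpow r (ht.trans_le hr.1)).hasDerivWithinAt
  have hcont : ContinuousOn (fun r => O.Phi r * r ^ (-p)) (Icc t s) :=
    (O.continuousOn_Phi.mono fun r hr => ht.le.trans hr.1).mul
      fun r hr => (hpow r (ht.trans_le hr.1)).continuousAt.continuousWithinAt
  have hnonpos : ∀ r ∈ Ico t s, O.phi r * r ^ (-p) + O.Phi r * (-p * r ^ (-p - 1)) ≤ 0 := by
    intro r hr
    have hr : 0 < r := ht.trans_le hr.1
    have : O.phi r * r ^ (-p) + O.Phi r * (-p * r ^ (-p - 1)) =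
        r ^ (-p) / r * (r * O.phi r - p * O.Phi r) := by
      rw [Real.rpow_sub_one hr.ne']
      field_simp
      ring
    rw [this]
    exact mul_nonpos_of_nonneg_of_nonpos (by positivity)
      (by linarith [O.mul_phi_le_pPlus_mul_Phi hr])
  have key := image_le_of_deriv_right_le_deriv_boundary hcont hderiv
    (B := fun _ => O.Phi t * t ^ (-p)) le_rfl continuousOn_const
    (fun _ _ => hasDerivWithinAt_const _ _ _) hnonpos ⟨hts, le_rfl⟩
  have hs : 0 < s := ht.trans_le hts
  rw [Real.rpow_neg hs.le, Real.rpow_neg ht.le, ← div_eq_mul_inv, ← div_eq_mul_inv,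
    div_le_iff₀ (by positivity)] at key
  rwa [Real.div_rpow hs.le ht.le, div_mul_eq_mul_div, mul_comm, mul_div_right_comm]

theorem Phi_two_mul_le (ht : 0 ≤ t) : O.Phi (2 * t) ≤ 2 ^ O.pPlus * O.Phi t := by
  rcases ht.eq_or_lt with rfl | ht
  · simp
  simpa [ht.ne'] using O.Phi_le_rpow_mul_Phi ht (by linarith : t ≤ 2 * t)

theorem convexOn_Phi : ConvexOn ℝ (Ici 0) O.Phi := by
  refine convexOn_of_slope_mono_adjacent (convex_Ici 0) fun {x y z} hx _ hxy hyz => ?_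
  have hy : 0 ≤ y := le_trans hx hxy.le
  calc (O.Phi y - O.Phi x) / (y - x) ≤ O.phi y := by
        rw [div_le_iff₀ (by linarith), mul_comm]
        exact O.Phi_sub_Phi_le_sub_mul_phi hx hxy.le
    _ ≤ (O.Phi z - O.Phi y) / (z - y) := by
        rw [le_div_iff₀ (by linarith), mul_comm]
        exact O.sub_mul_phi_le_Phi_sub_Phi hy hyz.le

theorem convexOn_Phi_abs_sub (c : ℝ) : ConvexOn ℝ univ fun r => O.Phi |r - c| := by
  refine ⟨convex_univ, fun x _ y _ a b ha hb hab => ?_⟩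
  have habs : |a • x + b • y - c| ≤ a * |x - c| + b * |y - c| := by
    calc |a • x + b • y - c| = |a * (x - c) + b * (y - c)| := by
          rw [smul_eq_mul, smul_eq_mul]
          congr 1
          linear_combination c * hab
      _ ≤ |a * (x - c)| + |b * (y - c)| := abs_add_le _ _
      _ = a * |x - c| + b * |y - c| := by rw [abs_mul, abs_mul, abs_of_nonneg ha, abs_of_nonneg hb]
  calc O.Phi |a • x + b • y - c| ≤ O.Phi (a * |x - c| + b * |y - c|) :=
        O.monotoneOn_Phi (mem_Ici.2 (abs_nonneg _)) (mem_Ici.2 (by positivity)) habs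
    _ ≤ a • O.Phi |x - c| + b • O.Phi |y - c| :=
        O.convexOn_Phi.2 (mem_Ici.2 (abs_nonneg _)) (mem_Ici.2 (abs_nonneg _)) ha hb hab

theorem continuous_Phi_abs_sub (c : ℝ) : Continuous fun r => O.Phi |r - c| :=
  O.continuousOn_Phi.comp_continuous (continuous_id.sub continuous_const).abs
    fun _ => mem_Ici.2 (abs_nonneg _)

theorem Phi_abs_sub_le (a b c : ℝ) :
    O.Phi |a - b| ≤ 2 ^ O.pPlus / 2 * (O.Phi |a - c| + O.Phi |b - c|) := by
  have h : |a - b| ≤ (1 / 2 : ℝ) • (2 * |a - c|) + (1 / 2 : ℝ) • (2 * |b - c|) := by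
    simp only [smul_eq_mul]
    linarith [abs_sub_le a c b, abs_sub_comm b c]
  calc O.Phi |a - b| ≤ O.Phi ((1 / 2 : ℝ) • (2 * |a - c|) + (1 / 2 : ℝ) • (2 * |b - c|)) :=
        O.monotoneOn_Phi (mem_Ici.2 (abs_nonneg _))
          (mem_Ici.2 (by simp only [smul_eq_mul]; positivity)) h
    _ ≤ (1 / 2 : ℝ) • O.Phi (2 * |a - c|) + (1 / 2 : ℝ) • O.Phi (2 * |b - c|) :=
        O.convexOn_Phi.2 (mem_Ici.2 (by positivity)) (mem_Ici.2 (by positivity))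
          (by norm_num) (by norm_num) (by norm_num)
    _ ≤ (1 / 2 : ℝ) * (2 ^ O.pPlus * O.Phi |a - c|) +
          (1 / 2 : ℝ) * (2 ^ O.pPlus * O.Phi |b - c|) := by
        simp only [smul_eq_mul]
        gcongr <;> exact O.Phi_two_mul_le (abs_nonneg _)
    _ = 2 ^ O.pPlus / 2 * (O.Phi |a - c| + O.Phi |b - c|) := by ring

theorem Phi_abs_setAverage_sub_le {α : Type*} [MeasurableSpace α] {μ : Measure α} {A B : Set α}
    (hAB : A ⊆ B) (hA₀ : μ A ≠ 0) (hA : μ A ≠ ∞) {v : α → ℝ} (hv : IntegrableOn v A μ) (c : ℝ)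
    (hΦv : IntegrableOn (fun x => O.Phi |v x - c|) B μ) :
    O.Phi |(⨍ x in A, v x ∂μ) - c| ≤ (μ A).toReal⁻¹ * ∫ x in B, O.Phi |v x - c| ∂μ :=
  calc O.Phi |(⨍ x in A, v x ∂μ) - c| ≤ ⨍ x in A, O.Phi |v x - c| ∂μ :=
        (O.convexOn_Phi_abs_sub c).map_set_average_le (O.continuous_Phi_abs_sub c).continuousOn
          isClosed_univ hA₀ hA (ae_of_all _ fun _ => mem_univ _) hv (hΦv.mono_set hAB)
    _ = (μ A).toReal⁻¹ * ∫ x in A, O.Phi |v x - c| ∂μ := setAverage_eq _ _ _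
    _ ≤ (μ A).toReal⁻¹ * ∫ x in B, O.Phi |v x - c| ∂μ := by
        gcongr
        exact ae_of_all _ fun _ => O.Phi_nonneg (abs_nonneg _)

end OrliczFunction

theorem HasCompactSupport.integrableOn_comp {X : Type*} [TopologicalSpace X] [MeasurableSpace X]
    [OpensMeasurableSpace X] {μ : Measure X} {u : X → ℝ} (hsupp : HasCompactSupport u)
    (hu : Continuous u) {F : ℝ → ℝ} (hF : Continuous F) {S : Set X} (hS : μ S ≠ ∞) :
    IntegrableOn (F ∘ u) S μ := by
  have : IsFiniteMeasure (μ.restrict S) := isFiniteMeasure_restrict.2 hS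
  obtain ⟨C, hC⟩ := ((hsupp.isCompact_range hu).image hF).isBounded.exists_norm_le
  exact Integrable.of_bound (hF.comp hu).aestronglyMeasurable C
    (ae_of_all _ fun x => hC _ ⟨u x, mem_range_self x, rfl⟩)

theorem stmt8_general {N : ℕ} (O : OrliczFunction) (P Q : Set (E N))
    (hP0 : 0 < volume P) (hPfin : volume P < ⊤)
    (hQ0 : 0 < volume Q) (hQfin : volume Q < ⊤)
    (u : E N → ℝ) (hu : ContDiff ℝ 1 u) (hsupp : HasCompactSupport u) :
    O.Phi |(⨍ x in P, u x) - ⨍ x in Q, u x| ≤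
      (2:ℝ) ^ O.pPlus / min (volume P).toReal (volume Q).toReal *
        ∫ x in P ∪ Q, O.Phi |u x - ⨍ y in P ∪ Q, u y| := by
  set m := ⨍ y in P ∪ Q, u y
  set I := ∫ x in P ∪ Q, O.Phi |u x - m|
  have hPQ : volume (P ∪ Q) ≠ ∞ := (measure_union_lt_top hPfin hQfin).ne
  have hΦu : IntegrableOn (fun x => O.Phi |u x - m|) (P ∪ Q) :=
    hsupp.integrableOn_comp hu.continuous (O.continuous_Phi_abs_sub m) hPQ
  have hP := O.Phi_abs_setAverage_sub_le subset_union_left hP0.ne' hPfin.ne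
    (show IntegrableOn u P from hsupp.integrableOn_comp hu.continuous continuous_id hPfin.ne) m hΦu
  have hQ := O.Phi_abs_setAverage_sub_le subset_union_right hQ0.ne' hQfin.ne
    (show IntegrableOn u Q from hsupp.integrableOn_comp hu.continuous continuous_id hQfin.ne) m hΦu
  have hI : 0 ≤ I := integral_nonneg fun _ => O.Phi_nonneg (abs_nonneg _)
  have hmin : 0 < min (volume P).toReal (volume Q).toReal :=
    lt_min (ENNReal.toReal_pos hP0.ne' hPfin.ne) (ENNReal.toReal_pos hQ0.ne' hQfin.ne)
  calc _ ≤ 2 ^ O.pPlus / 2 * (O.Phi |(⨍ x in P, u x) - m| + O.Phi |(⨍ x in Q, u x) - m|) :=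
        O.Phi_abs_sub_le _ _ m
    _ ≤ 2 ^ O.pPlus / 2 * ((volume P).toReal⁻¹ * I + (volume Q).toReal⁻¹ * I) := by gcongr
    _ ≤ 2 ^ O.pPlus / 2 * ((min (volume P).toReal (volume Q).toReal)⁻¹ * I +
          (min (volume P).toReal (volume Q).toReal)⁻¹ * I) := by
        gcongr
        exacts [min_le_left _ _, min_le_right _ _]
    _ = _ := by field_simp; ring

theorem stmt8 {N : ℕ} (O : OrliczFunction) (P Q : Set (E N))
    (hPm : MeasurableSet P) (hQm : MeasurableSet Q) (hdisj : Disjoint P Q)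
    (hP0 : 0 < volume P) (hPfin : volume P < ⊤)
    (hQ0 : 0 < volume Q) (hQfin : volume Q < ⊤)
    (u : E N → ℝ) (hu : ContDiff ℝ 1 u) (hsupp : HasCompactSupport u) :
    O.Phi |(⨍ x in P, u x) - ⨍ x in Q, u x| ≤
      (2:ℝ) ^ O.pPlus / min (volume P).toReal (volume Q).toReal *
        ∫ x in P ∪ Q, O.Phi |u x - ⨍ y in P ∪ Q, u y| :=
  stmt8_general O P Q hP0 hPfin hQ0 hQfin u hu hsupp
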